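/- Type preservation of the selective CPS translation: (1) if Γ ⊢p e : τ ⇝p e′ in the fine-grained λF, then ⟦Γ⟧ ⊢C e′ : ⟦τ⟧ in λC; and (2) if Γ ⊢ e : τ @ μα α / μβ β ⇝ e′ in the fine-grained λF, then ⟦Γ⟧ ⊢C e′ : (⟦τ⟧ → ⟦μα⟧ → ⟦α⟧) → ⟦μβ⟧ → ⟦β⟧ in λC. -/

import Mathlib

namespace LambdaF

/-! ## Syntax and operational semantics of λF -/

/-- λF expressions.  A constant `const ι n` is the `n`-th constant of base type `ι`. -/
inductive Tm : Type where
  | const : Nat → Nat → Tm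
  | var : String → Tm
  | lam : String → Tm → Tm
  | app : Tm → Tm → Tm
  | control : String → Tm → Tm
  | prompt : Tm → Tm

/-- Values `v ::= c | x | λx.e`. -/
inductive IsVal : Tm → Prop where
  | const (ι n : Nat) : IsVal (.const ι n)
  | var (x : String) : IsVal (.var x)
  | lam (x : String) (e : Tm) : IsVal (.lam x e)

/-- Substitution `e[x := v]`. -/
def subst : Tm → String → Tm → Tm
  | .const ι n, _, _ => .const ι n
  | .var y, x, v => if y = x then v else .var y
  | .lam y e, x, v => if y = x then .lam y e else .lam y (subst e x v)
  | .app e₁ e₂, x, v => .app (subst e₁ x v) (subst e₂ x v)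
  | .control k e, x, v => if k = x then .control k e else .control k (subst e x v)
  | .prompt e, x, v => .prompt (subst e x v)

/-- All variable names occurring in a term (free or bound). -/
def Tm.vars : Tm → List String
  | .const _ _ => []
  | .var y => [y]
  | .lam y e => y :: e.vars
  | .app e₁ e₂ => e₁.vars ++ e₂.vars
  | .control k e => k :: e.vars
  | .prompt e => e.vars

/-- Pure evaluation contexts `F ::= [] | F e | v F`. -/
inductive PCtx : Type where
  | hole : PCtx
  | appL : PCtx → Tm → PCtx
  | appR : Tm → PCtx → PCtx

/-- Plugging an expression into a pure context. -/
def PCtx.plug : PCtx → Tm → Tm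
  | .hole, e => e
  | .appL P e₂, e => .app (P.plug e) e₂
  | .appR v P, e => .app v (P.plug e)

/-- Well-formedness of pure contexts: in `v F`, `v` is a value. -/
inductive PCtx.Wf : PCtx → Prop where
  | hole : PCtx.Wf .hole
  | appL (P : PCtx) (e : Tm) : PCtx.Wf P → PCtx.Wf (.appL P e)
  | appR (v : Tm) (P : PCtx) : IsVal v → PCtx.Wf P → PCtx.Wf (.appR v P)

/-- All variable names occurring in a pure context. -/
def PCtx.vars : PCtx → List String
  | .hole => []
  | .appL P e => P.vars ++ e.vars
  | .appR v P => v.vars ++ P.vars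

/-- General evaluation contexts `E ::= [] | E e | v E | ⟨E⟩`. -/
inductive ECtx : Type where
  | hole : ECtx
  | appL : ECtx → Tm → ECtx
  | appR : Tm → ECtx → ECtx
  | prompt : ECtx → ECtx

/-- Plugging an expression into a general context. -/
def ECtx.plug : ECtx → Tm → Tm
  | .hole, e => e
  | .appL E e₂, e => .app (E.plug e) e₂
  | .appR v E, e => .app v (E.plug e)
  | .prompt E, e => .prompt (E.plug e)

/-- Well-formedness of general contexts: in `v E`, `v` is a value. -/
inductive ECtx.Wf : ECtx → Prop where
  | hole : ECtx.Wf .hole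
  | appL (E : ECtx) (e : Tm) : ECtx.Wf E → ECtx.Wf (.appL E e)
  | appR (v : Tm) (E : ECtx) : IsVal v → ECtx.Wf E → ECtx.Wf (.appR v E)
  | prompt (E : ECtx) : ECtx.Wf E → ECtx.Wf (.prompt E)

/-- Reduction of λF. -/
inductive Step : Tm → Tm → Prop where
  | beta (E : ECtx) (x : String) (e v : Tm) :
      E.Wf → IsVal v →
      Step (E.plug (.app (.lam x e) v)) (E.plug (subst e x v))
  | control (E : ECtx) (P : PCtx) (k : String) (e : Tm) (x : String) :
      E.Wf → P.Wf → x ∉ P.vars →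
      Step (E.plug (.prompt (P.plug (.control k e))))
           (E.plug (.prompt (subst e k (.lam x (P.plug (.var x))))))
  | prompt (E : ECtx) (v : Tm) :
      E.Wf → IsVal v →
      Step (E.plug (.prompt v)) (E.plug v)

/-- Reflexive transitive closure of reduction. -/
def Steps : Tm → Tm → Prop := Relation.ReflTransGen Step

/-! ## Types and the fine-grained type system of λF -/

mutual
/-- Fine-grained λF expression types
    `τ ::= ι | (τ₁ → τ₂ @ μα α μβ β) | (τ₁ →p τ₂)`. -/
inductive FTy : Type where
  | base : Nat → FTy
  | arrow : FTy → FTy → FTr → FTy → FTr → FTy → FTy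
  | parrow : FTy → FTy → FTy

/-- Fine-grained λF trail types `μ ::= • | (τ ⇒⟨μ⟩ τ′)`. -/
inductive FTr : Type where
  | empty : FTr
  | cons : FTy → FTr → FTy → FTr
end

/-- `id-cont-type τ μ τ′`. -/
def FIdContType : FTy → FTr → FTy → Prop
  | τ, .empty, τ' => τ = τ'
  | τ, .cons τ₁ μ₁ τ₁', τ' => τ = τ₁ ∧ τ' = τ₁' ∧ μ₁ = .empty

/-- `compatible μ₁ μ₂ μ₃`. -/
inductive FCompatible : FTr → FTr → FTr → Prop where
  | empty (μ : FTr) : FCompatible .empty μ μ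
  | consEmpty (τ₁ : FTy) (μ₁ : FTr) (τ₁' : FTy) :
      FCompatible (.cons τ₁ μ₁ τ₁') .empty (.cons τ₁ μ₁ τ₁')
  | consCons (τ₁ : FTy) (μ₁ : FTr) (τ₁' : FTy) (μ₂ μ₃ : FTr) :
      FCompatible μ₂ μ₃ μ₁ →
      FCompatible (.cons τ₁ μ₁ τ₁') μ₂ (.cons τ₁ μ₃ τ₁')

/-- Fine-grained typing contexts. -/
abbrev FCtx := List (String × FTy)

/-- Context lookup (with shadowing). -/
inductive FLookup : FCtx → String → FTy → Prop where
  | here (Γ : FCtx) (x : String) (τ : FTy) : FLookup ((x, τ) :: Γ) x τ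
  | there (Γ : FCtx) (x y : String) (τ τ' : FTy) :
      x ≠ y → FLookup Γ x τ → FLookup ((y, τ') :: Γ) x τ

mutual
/-- The pure judgment `Γ ⊢p e : τ` of the fine-grained λF. -/
inductive HasTypeP : FCtx → Tm → FTy → Prop where
  | const (Γ : FCtx) (ι n : Nat) : HasTypeP Γ (.const ι n) (.base ι)
  | var (Γ : FCtx) (x : String) (τ : FTy) :
      FLookup Γ x τ → HasTypeP Γ (.var x) τ
  | pabs (Γ : FCtx) (x : String) (e : Tm) (τ₁ τ₂ : FTy) :
      HasTypeP ((x, τ₁) :: Γ) e τ₂ →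
      HasTypeP Γ (.lam x e) (.parrow τ₁ τ₂)
  | iabs (Γ : FCtx) (x : String) (e : Tm) (τ₁ τ₂ : FTy) (μα : FTr) (α : FTy)
      (μβ : FTr) (β : FTy) :
      HasTypeI ((x, τ₁) :: Γ) e τ₂ μα α μβ β →
      HasTypeP Γ (.lam x e) (.arrow τ₁ τ₂ μα α μβ β)
  | papp (Γ : FCtx) (e₁ e₂ : Tm) (τ₁ τ₂ : FTy) :
      HasTypeP Γ e₁ (.parrow τ₁ τ₂) → HasTypeP Γ e₂ τ₁ →
      HasTypeP Γ (.app e₁ e₂) τ₂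
  | pprompt (Γ : FCtx) (e : Tm) (τ : FTy) :
      HasTypeP Γ e τ → HasTypeP Γ (.prompt e) τ
  | iprompt (Γ : FCtx) (e : Tm) (β : FTy) (μi : FTr) (β' τ : FTy) :
      HasTypeI Γ e β μi β' .empty τ →
      FIdContType β μi β' →
      HasTypeP Γ (.prompt e) τ

/-- The impure judgment `Γ ⊢ e : τ @ μα α / μβ β` of the fine-grained λF. -/
inductive HasTypeI : FCtx → Tm → FTy → FTr → FTy → FTr → FTy → Prop where
  | piapp (Γ : FCtx) (e₁ e₂ : Tm) (τ₁ τ₂ : FTy) (μα : FTr) (α : FTy)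
      (μβ : FTr) (β : FTy) (μγ : FTr) (γ : FTy) :
      HasTypeI Γ e₁ (.parrow τ₁ τ₂) μα α μβ β →
      HasTypeI Γ e₂ τ₁ μγ γ μα α →
      HasTypeI Γ (.app e₁ e₂) τ₂ μγ γ μβ β
  | iapp (Γ : FCtx) (e₁ e₂ : Tm) (τ₁ τ₂ : FTy) (μα : FTr) (α : FTy)
      (μβ : FTr) (β : FTy) (μγ : FTr) (γ : FTy) (μδ : FTr) (δ : FTy) :
      HasTypeI Γ e₁ (.arrow τ₁ τ₂ μα α μβ β) μγ γ μδ δ →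
      HasTypeI Γ e₂ τ₁ μβ β μγ γ →
      HasTypeI Γ (.app e₁ e₂) τ₂ μα α μδ δ
  | pcontrol (Γ : FCtx) (k : String) (e : Tm) (τ α γ : FTy) (μi : FTr)
      (γ' β : FTy) (μα : FTr) :
      HasTypeI ((k, .parrow τ α) :: Γ) e γ μi γ' .empty β →
      FIdContType γ μi γ' →
      HasTypeI Γ (.control k e) τ μα α μα β
  | icontrol (Γ : FCtx) (k : String) (e : Tm) (τ τ₁ : FTy) (μ₁ : FTr)
      (τ₁' : FTy) (μ₂ μ₀ : FTr) (α β γ : FTy) (μi : FTr) (γ' : FTy) (μα μβ : FTr) :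
      HasTypeI ((k, .arrow τ τ₁ μ₁ τ₁' μ₂ α) :: Γ) e γ μi γ' .empty β →
      FIdContType γ μi γ' →
      FCompatible (.cons τ₁ μ₁ τ₁') μ₂ μ₀ →
      FCompatible μβ μ₀ μα →
      HasTypeI Γ (.control k e) τ μα α μβ β
  | exp (Γ : FCtx) (e : Tm) (τ : FTy) (μα : FTr) (α : FTy) :
      HasTypeP Γ e τ →
      HasTypeI Γ e τ μα α μα α
end

/-! ## The target calculus λC -/

/-- λC variables: either a λF source variable, or a generated variable
    identified by a pair of numbers (level, slot). -/
abbrev CVar := Sum String (Nat × Nat)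

/-- The generated λC variable at level `n`, slot `i`. -/
def gv (n i : Nat) : CVar := Sum.inr (n, i)

/-- λC expressions, with a unit value `()` and a trail-case construct
    `case t of () → e₁ | k → e₂` (binding `k` in `e₂`). -/
inductive CTm : Type where
  | const : Nat → Nat → CTm
  | cvar : CVar → CTm
  | clam : CVar → CTm → CTm
  | capp : CTm → CTm → CTm
  | unit : CTm
  | ccase : CTm → CTm → CVar → CTm → CTm

/-- Substitution on λC expressions. -/
def substC : CTm → CVar → CTm → CTm
  | .const ι n, _, _ => .const ι n
  | .cvar y, x, v => if y = x then v else .cvar y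
  | .clam y e, x, v => if y = x then .clam y e else .clam y (substC e x v)
  | .capp e₁ e₂, x, v => .capp (substC e₁ x v) (substC e₂ x v)
  | .unit, _, _ => .unit
  | .ccase t e₁ k e₂, x, v =>
      .ccase (substC t x v) (substC e₁ x v) k (if k = x then e₂ else substC e₂ x v)

/-- λC types `σ ::= ι | σ → σ | •`. -/
inductive CTy : Type where
  | base : Nat → CTy
  | arrow : CTy → CTy → CTy
  | unit : CTy

/-- λC typing contexts. -/
abbrev CCtx := List (CVar × CTy)

/-- λC context lookup (with shadowing). -/
inductive CLookup : CCtx → CVar → CTy → Prop where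
  | here (Γ : CCtx) (x : CVar) (σ : CTy) : CLookup ((x, σ) :: Γ) x σ
  | there (Γ : CCtx) (x y : CVar) (σ σ' : CTy) :
      x ≠ y → CLookup Γ x σ → CLookup ((y, σ') :: Γ) x σ

/-- The typing judgment `Γ ⊢C e : σ` of λC.  In the `ccase` rule, the first
    branch is typed under the equality assumption that the scrutinee's type is
    `•`, and the second branch under the assumptions that `k` has the
    scrutinee's type and that this type is a function type. -/
inductive HasTypeC : CCtx → CTm → CTy → Prop where
  | const (Γ : CCtx) (ι n : Nat) : HasTypeC Γ (.const ι n) (.base ι)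
  | var (Γ : CCtx) (x : CVar) (σ : CTy) :
      CLookup Γ x σ → HasTypeC Γ (.cvar x) σ
  | lam (Γ : CCtx) (x : CVar) (e : CTm) (σ₁ σ₂ : CTy) :
      HasTypeC ((x, σ₁) :: Γ) e σ₂ →
      HasTypeC Γ (.clam x e) (.arrow σ₁ σ₂)
  | app (Γ : CCtx) (e₁ e₂ : CTm) (σ₁ σ₂ : CTy) :
      HasTypeC Γ e₁ (.arrow σ₁ σ₂) → HasTypeC Γ e₂ σ₁ →
      HasTypeC Γ (.capp e₁ e₂) σ₂
  | unit (Γ : CCtx) : HasTypeC Γ .unit .unit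
  | ccase (Γ : CCtx) (t e₁ : CTm) (k : CVar) (e₂ : CTm) (σ ρ : CTy) :
      HasTypeC Γ t σ →
      (σ = .unit → HasTypeC Γ e₁ ρ) →
      (∀ σ₁ σ₂, σ = .arrow σ₁ σ₂ → HasTypeC ((k, σ) :: Γ) e₂ ρ) →
      HasTypeC Γ (.ccase t e₁ k e₂) ρ

/-- The identity continuation `k_id = λv.λt. case t of () → v | k → k v ()`. -/
def kidTm : CTm :=
  .clam (gv 0 13) (.clam (gv 0 14)
    (.ccase (.cvar (gv 0 14)) (.cvar (gv 0 13)) (gv 0 15)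
      (.capp (.capp (.cvar (gv 0 15)) (.cvar (gv 0 13))) .unit)))

/-! ## Selective CPS translation of the fine-grained λF -/

mutual
/-- CPS translation of fine-grained λF expression types. -/
def fcpsTy : FTy → CTy
  | .base ι => .base ι
  | .arrow τ₁ τ₂ μα α μβ β =>
      .arrow (fcpsTy τ₁)
        (.arrow (.arrow (fcpsTy τ₂) (.arrow (fcpsTr μα) (fcpsTy α)))
          (.arrow (fcpsTr μβ) (fcpsTy β)))
  | .parrow τ₁ τ₂ => .arrow (fcpsTy τ₁) (fcpsTy τ₂)

/-- CPS translation of fine-grained λF trail types. -/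
def fcpsTr : FTr → CTy
  | .empty => .unit
  | .cons τ μ τ' => .arrow (fcpsTy τ) (.arrow (fcpsTr μ) (fcpsTy τ'))
end

/-- Size of a trail type. -/
def FTr.size : FTr → Nat
  | .empty => 0
  | .cons _ μ _ => μ.size + 1

/-- The trail-cons operation
    `k :: t = case t of () → k | k′ → λv.λt′. k v (k′ :: t′)`,
    defined by recursion on trail types (see `consTm`). -/
def fconsTm : FTr → FTr → FTr → Nat → CTm → CTm → CTm
  | μA, .cons _ μB' _, .cons _ μC' _, m, k, t =>
      .ccase t k (gv m 10)
        (.clam (gv m 11) (.clam (gv m 12)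
          (.capp (.capp k (.cvar (gv m 11)))
            (fconsTm μB' μC' μA (m + 1) (.cvar (gv m 10)) (.cvar (gv m 12))))))
  | _, _, _, m, k, t =>
      .ccase t k (gv m 10)
        (.clam (gv m 11) (.clam (gv m 12)
          (.capp (.capp k (.cvar (gv m 11))) (.cvar (gv m 12)))))
termination_by μA μB μC _ _ _ => μA.size + μB.size + μC.size
decreasing_by simp [FTr.size]; omega

/-- The trail-append operation `t @ t′ = case t of () → t′ | k → k :: t′`. -/
def fappendTm : FTr → FTr → FTr → Nat → CTm → CTm → CTm
  | .empty, _, _, m, t, t' => .ccase t t' (gv m 10) (.cvar (gv m 10))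
  | .cons _ μ₁' _, μ₂, μ₃, m, t, t' =>
      .ccase t t' (gv m 10) (fconsTm μ₁' μ₂ μ₃ (m + 1) (.cvar (gv m 10)) t')

mutual
/-- The selective CPS translation on pure typing derivations:
    `SelP n Γ e τ e'` means `Γ ⊢p e : τ ⇝p e'`.  The level `n` generates
    fresh λC variable names. -/
inductive SelP : Nat → FCtx → Tm → FTy → CTm → Prop where
  | const (n : Nat) (Γ : FCtx) (ι c : Nat) :
      SelP n Γ (.const ι c) (.base ι) (.const ι c)
  | var (n : Nat) (Γ : FCtx) (x : String) (τ : FTy) :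
      FLookup Γ x τ →
      SelP n Γ (.var x) τ (.cvar (Sum.inl x))
  | pabs (n : Nat) (Γ : FCtx) (x : String) (e : Tm) (τ₁ τ₂ : FTy) (e' : CTm) :
      SelP (n + 1) ((x, τ₁) :: Γ) e τ₂ e' →
      SelP n Γ (.lam x e) (.parrow τ₁ τ₂) (.clam (Sum.inl x) e')
  | iabs (n : Nat) (Γ : FCtx) (x : String) (e : Tm) (τ₁ τ₂ : FTy) (μα : FTr)
      (α : FTy) (μβ : FTr) (β : FTy) (e' : CTm) :
      SelI (n + 1) ((x, τ₁) :: Γ) e τ₂ μα α μβ β e' →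
      SelP n Γ (.lam x e) (.arrow τ₁ τ₂ μα α μβ β)
        (.clam (Sum.inl x) (.clam (gv n 2) (.clam (gv n 3)
          (.capp (.capp e' (.cvar (gv n 2))) (.cvar (gv n 3))))))
  | papp (n : Nat) (Γ : FCtx) (e₁ e₂ : Tm) (τ₁ τ₂ : FTy) (e₁' e₂' : CTm) :
      SelP (n + 1) Γ e₁ (.parrow τ₁ τ₂) e₁' →
      SelP (n + 2) Γ e₂ τ₁ e₂' →
      SelP n Γ (.app e₁ e₂) τ₂ (.capp e₁' e₂')
  | prompt (n : Nat) (Γ : FCtx) (e : Tm) (β : FTy) (μi : FTr) (β' τ : FTy)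
      (e' : CTm) :
      SelI (n + 1) Γ e β μi β' .empty τ e' →
      FIdContType β μi β' →
      SelP n Γ (.prompt e) τ (.capp (.capp e' kidTm) .unit)

/-- The selective CPS translation on impure typing derivations:
    `SelI n Γ e τ μα α μβ β e'` means `Γ ⊢ e : τ @ μα α / μβ β ⇝ e'`. -/
inductive SelI : Nat → FCtx → Tm → FTy → FTr → FTy → FTr → FTy → CTm → Prop where
  | piapp (n : Nat) (Γ : FCtx) (e₁ e₂ : Tm) (τ₁ τ₂ : FTy) (μα : FTr) (α : FTy)
      (μβ : FTr) (β : FTy) (μγ : FTr) (γ : FTy) (e₁' e₂' : CTm) :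
      SelI (n + 1) Γ e₁ (.parrow τ₁ τ₂) μα α μβ β e₁' →
      SelI (n + 2) Γ e₂ τ₁ μγ γ μα α e₂' →
      SelI n Γ (.app e₁ e₂) τ₂ μγ γ μβ β
        (.clam (gv n 0)
          (.capp e₁'
            (.clam (gv n 2)
              (.capp e₂'
                (.clam (gv n 4)
                  (.capp (.cvar (gv n 0))
                    (.capp (.cvar (gv n 2)) (.cvar (gv n 4)))))))))
  | iapp (n : Nat) (Γ : FCtx) (e₁ e₂ : Tm) (τ₁ τ₂ : FTy) (μα : FTr) (α : FTy)
      (μβ : FTr) (β : FTy) (μγ : FTr) (γ : FTy) (μδ : FTr) (δ : FTy)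
      (e₁' e₂' : CTm) :
      SelI (n + 1) Γ e₁ (.arrow τ₁ τ₂ μα α μβ β) μγ γ μδ δ e₁' →
      SelI (n + 2) Γ e₂ τ₁ μβ β μγ γ e₂' →
      SelI n Γ (.app e₁ e₂) τ₂ μα α μδ δ
        (.clam (gv n 0)
          (.capp e₁'
            (.clam (gv n 2)
              (.capp e₂'
                (.clam (gv n 4)
                  (.capp (.capp (.cvar (gv n 2)) (.cvar (gv n 4)))
                    (.cvar (gv n 0))))))))
  | pcontrol (n : Nat) (Γ : FCtx) (k : String) (e : Tm) (τ α γ : FTy)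
      (μi : FTr) (γ' β : FTy) (μα : FTr) (e' : CTm) :
      SelI (n + 1) ((k, .parrow τ α) :: Γ) e γ μi γ' .empty β e' →
      FIdContType γ μi γ' →
      SelI n Γ (.control k e) τ μα α μα β
        (.clam (gv n 0) (.clam (gv n 1)
          (.capp
            (.capp
              (substC e' (Sum.inl k)
                (.clam (gv n 2)
                  (.capp (.capp (.cvar (gv n 0)) (.cvar (gv n 2)))
                    (.cvar (gv n 1)))))
              kidTm)
            .unit)))
  | icontrol (n : Nat) (Γ : FCtx) (k : String) (e : Tm) (τ τ₁ : FTy) (μ₁ : FTr)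
      (τ₁' : FTy) (μ₂ μ₀ : FTr) (α β γ : FTy) (μi : FTr) (γ' : FTy) (μα μβ : FTr)
      (e' : CTm) :
      SelI (n + 1) ((k, .arrow τ τ₁ μ₁ τ₁' μ₂ α) :: Γ) e γ μi γ' .empty β e' →
      FIdContType γ μi γ' →
      FCompatible (.cons τ₁ μ₁ τ₁') μ₂ μ₀ →
      FCompatible μβ μ₀ μα →
      SelI n Γ (.control k e) τ μα α μβ β
        (.clam (gv n 0) (.clam (gv n 1)
          (.capp
            (.capp
              (substC e' (Sum.inl k)
                (.clam (gv n 2) (.clam (gv n 3) (.clam (gv n 4)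
                  (.capp (.capp (.cvar (gv n 0)) (.cvar (gv n 2)))
                    (fappendTm μβ μ₀ μα n (.cvar (gv n 1))
                      (fconsTm μ₁ μ₂ μ₀ n (.cvar (gv n 3)) (.cvar (gv n 4)))))))))
              kidTm)
            .unit)))
  | exp (n : Nat) (Γ : FCtx) (e : Tm) (τ : FTy) (μα : FTr) (α : FTy) (e' : CTm) :
      SelP n Γ e τ e' →
      SelI n Γ e τ μα α μα α
        (.clam (gv n 0) (.clam (gv n 1)
          (.capp (.capp (.cvar (gv n 0)) e') (.cvar (gv n 1)))))
end

/-!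
Each translation rule is checked against the typing rules of λC, by mutual induction on the
translation. The trail operations have the types dictated by the trail types: `k_id` through
`id-cont-type`, and `k :: t` by induction on the `compatible` derivation. The delicate rules are
the two control rules, which substitute for the continuation variable `k` a λC term whose free
variables are the generated variables `k, t` of the current level `n`. This substitution is
capture-free because a translation at level `n + 1` binds only source variables, generated
variables of level at least `n + 1` and the binders of `k_id`, an invariant that holds by a
separate induction on the translation.
-/

def cpsCtx (Γ : FCtx) : CCtx := Γ.map fun p => (Sum.inl p.1, fcpsTy p.2)

abbrev contTy (τ : FTy) (μ : FTr) (α : FTy) : CTy :=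
  .arrow (fcpsTy τ) (.arrow (fcpsTr μ) (fcpsTy α))

abbrev compTy (τ : FTy) (μα : FTr) (α : FTy) (μβ : FTr) (β : FTy) : CTy :=
  .arrow (contTy τ μα α) (.arrow (fcpsTr μβ) (fcpsTy β))

theorem CLookup.eq_of_head {Γ : CCtx} {x : CVar} {σ τ : CTy}
    (h : CLookup ((x, σ) :: Γ) x τ) : τ = σ := by
  cases h with
  | here => rfl
  | there _ _ _ _ _ hne _ => exact absurd rfl hne

theorem CLookup.cons_gv {Γ : CCtx} {x : CVar} {σ σ' : CTy} {m i : Nat} (h : CLookup Γ x σ)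
    (hx : x ≠ gv m i := by simp [gv]) : CLookup ((gv m i, σ') :: Γ) x σ :=
  .there _ _ _ _ _ hx h

theorem CLookup.cons_mono {Γ Γ' : CCtx} (hΓ : ∀ x σ, CLookup Γ x σ → CLookup Γ' x σ)
    (y : CVar) (τ : CTy) : ∀ x σ, CLookup ((y, τ) :: Γ) x σ → CLookup ((y, τ) :: Γ') x σ
  | _, _, .here .. => .here ..
  | _, _, .there _ _ _ _ _ hne h => .there _ _ _ _ _ hne (hΓ _ _ h)

theorem HasTypeC.mono {Γ Γ' : CCtx} {e : CTm} {ρ : CTy} (h : HasTypeC Γ e ρ)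
    (hΓ : ∀ x σ, CLookup Γ x σ → CLookup Γ' x σ) : HasTypeC Γ' e ρ := by
  induction h generalizing Γ' with
  | const => exact .const ..
  | var _ _ _ hx => exact .var _ _ _ (hΓ _ _ hx)
  | lam _ _ _ _ _ _ ih => exact .lam _ _ _ _ _ (ih (CLookup.cons_mono hΓ _ _))
  | app _ _ _ _ _ _ _ ih₁ ih₂ => exact .app _ _ _ _ _ (ih₁ hΓ) (ih₂ hΓ)
  | unit => exact .unit _
  | ccase _ _ _ _ _ _ _ _ _ _ iht ih₁ ih₂ =>
      exact .ccase _ _ _ _ _ _ _ (iht hΓ) (fun hσ => ih₁ hσ hΓ)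
        (fun σ₁ σ₂ hσ => ih₂ σ₁ σ₂ hσ (CLookup.cons_mono hΓ _ _))

theorem FLookup.cLookup_cpsCtx {Γ : FCtx} {x : String} {τ : FTy} (h : FLookup Γ x τ) :
    CLookup (cpsCtx Γ) (.inl x) (fcpsTy τ) := by
  induction h with
  | here => exact .here ..
  | there _ _ _ _ _ hne _ ih => exact .there _ _ _ _ _ (by simpa using hne) ih

theorem CLookup.exists_inl_of_cpsCtx {Γ : FCtx} {y : CVar} {σ : CTy}
    (h : CLookup (cpsCtx Γ) y σ) : ∃ x, y = .inl x := by
  induction Γ with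
  | nil => cases h
  | cons p Γ ih =>
      cases h with
      | here => exact ⟨p.1, rfl⟩
      | there _ _ _ _ _ _ h => exact ih h

theorem CLookup.append_of_inl {L Δ : CCtx} {x : String} {σ : CTy}
    (hL : ∀ p ∈ L, ∃ a, p.1 = .inr a) (h : CLookup Δ (.inl x) σ) :
    CLookup (L ++ Δ) (.inl x) σ := by
  induction L with
  | nil => exact h
  | cons p L ih =>
      obtain ⟨a, ha⟩ := hL p List.mem_cons_self
      exact .there _ _ _ _ _ (by simp [ha]) (ih fun q hq => hL q (List.mem_cons_of_mem _ hq))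

theorem HasTypeC.weaken_cpsCtx {Γ : FCtx} {e : CTm} {ρ : CTy} (h : HasTypeC (cpsCtx Γ) e ρ)
    (L : CCtx) (hL : ∀ p ∈ L, ∃ a, p.1 = .inr a) : HasTypeC (L ++ cpsCtx Γ) e ρ :=
  h.mono fun y _ hy => by
    obtain ⟨x, rfl⟩ := hy.exists_inl_of_cpsCtx
    exact hy.append_of_inl hL

def AllBinders (P : CVar → Prop) : CTm → Prop
  | .const .. | .cvar _ | .unit => True
  | .clam y e => P y ∧ AllBinders P e
  | .capp e₁ e₂ => AllBinders P e₁ ∧ AllBinders P e₂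
  | .ccase t e₁ k e₂ => P k ∧ AllBinders P t ∧ AllBinders P e₁ ∧ AllBinders P e₂

theorem AllBinders.mono {P Q : CVar → Prop} (hPQ : ∀ z, P z → Q z) :
    ∀ {e : CTm}, AllBinders P e → AllBinders Q e
  | .const .., _ | .cvar _, _ | .unit, _ => trivial
  | .clam _ _, ⟨hy, he⟩ => ⟨hPQ _ hy, mono hPQ he⟩
  | .capp .., ⟨h₁, h₂⟩ => ⟨mono hPQ h₁, mono hPQ h₂⟩
  | .ccase .., ⟨hk, ht, h₁, h₂⟩ => ⟨hPQ _ hk, mono hPQ ht, mono hPQ h₁, mono hPQ h₂⟩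

theorem AllBinders.subst {P : CVar → Prop} {v : CTm} :
    ∀ {e : CTm}, AllBinders P e → ∀ (x : CVar), AllBinders P v → AllBinders P (substC e x v)
  | .const .., _, _, _ | .unit, _, _, _ => trivial
  | .cvar _, _, _, hv => by
      unfold substC
      split
      · exact hv
      · trivial
  | .clam _ _, ⟨hy, he⟩, x, hv => by
      unfold substC
      split
      · exact ⟨hy, he⟩
      · exact ⟨hy, subst he x hv⟩
  | .capp .., ⟨h₁, h₂⟩, x, hv => ⟨subst h₁ x hv, subst h₂ x hv⟩
  | .ccase .., ⟨hk, ht, h₁, h₂⟩, x, hv => by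
      refine ⟨hk, subst ht x hv, subst h₁ x hv, ?_⟩
      split
      · exact h₂
      · exact subst h₂ x hv

/-- `FV` over-approximates the free variables of `v`: `v` is typed in every context that agrees
with `Γ'` on `FV`. -/
structure SubstCtx (FV : CVar → Prop) (x : CVar) (v : CTm) (σ : CTy) (Γ Γ' : CCtx) :
    Prop where
  lookup_self : ∀ τ, CLookup Γ x τ → τ = σ
  lookup_ne : ∀ y τ, y ≠ x → CLookup Γ y τ → CLookup Γ' y τ
  hasTypeC_val : ∀ Δ, (∀ y, FV y → ∀ τ, CLookup Γ' y τ → CLookup Δ y τ) → HasTypeC Δ v σ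

namespace SubstCtx

variable {FV : CVar → Prop} {x : CVar} {v : CTm} {σ : CTy} {Γ Γ' : CCtx}

theorem cons (h : SubstCtx FV x v σ Γ Γ') {y : CVar} (hyx : y ≠ x) (hy : ¬ FV y) (σ₁ : CTy) :
    SubstCtx FV x v σ ((y, σ₁) :: Γ) ((y, σ₁) :: Γ') where
  lookup_self τ hx := by
    cases hx with
    | here => exact absurd rfl hyx
    | there _ _ _ _ _ _ hx => exact h.lookup_self τ hx
  lookup_ne z τ hzx hz := by
    cases hz with
    | here => exact .here ..
    | there _ _ _ _ _ hne hz => exact .there _ _ _ _ _ hne (h.lookup_ne z τ hzx hz)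
  hasTypeC_val Δ hΔ :=
    h.hasTypeC_val Δ fun z hz τ h' => hΔ z hz τ (.there _ _ _ _ _ (fun hzy => hy (hzy ▸ hz)) h')

theorem lookup_cons_self (h : SubstCtx FV x v σ Γ Γ') (σ₁ : CTy) :
    ∀ z τ, CLookup ((x, σ₁) :: Γ) z τ → CLookup ((x, σ₁) :: Γ') z τ
  | _, _, .here .. => .here ..
  | z, τ, .there _ _ _ _ _ hne hz => .there _ _ _ _ _ hne (h.lookup_ne z τ hne hz)

end SubstCtx

theorem HasTypeC.subst {FV : CVar → Prop} {x : CVar} {v : CTm} {σ : CTy} {Γ Γ' : CCtx}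
    {e : CTm} {ρ : CTy} (he : HasTypeC Γ e ρ) (hcap : AllBinders (fun z => ¬ FV z) e)
    (hfit : SubstCtx FV x v σ Γ Γ') : HasTypeC Γ' (substC e x v) ρ := by
  induction he generalizing Γ' with
  | const => exact .const ..
  | var _ y _ hy =>
      unfold substC
      split
      · subst y
        exact hfit.lookup_self _ hy ▸ hfit.hasTypeC_val Γ' fun _ _ _ h => h
      · exact .var _ _ _ (hfit.lookup_ne _ _ ‹_› hy)
  | lam _ y _ _ _ hbody ih =>
      unfold substC
      split
      · subst y
        exact .lam _ _ _ _ _ (hbody.mono (hfit.lookup_cons_self _))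
      · exact .lam _ _ _ _ _ (ih hcap.2 (hfit.cons ‹_› hcap.1 _))
  | app _ _ _ _ _ _ _ ih₁ ih₂ => exact .app _ _ _ _ _ (ih₁ hcap.1 hfit) (ih₂ hcap.2 hfit)
  | unit => exact .unit _
  | ccase _ _ _ k _ _ _ _ _ h₂ iht ih₁ ih₂ =>
      refine .ccase _ _ _ _ _ _ _ (iht hcap.2.1 hfit)
        (fun hσ => ih₁ hσ hcap.2.2.1 hfit) fun σ₁ σ₂ hσ => ?_
      split
      · subst k
        exact (h₂ σ₁ σ₂ hσ).mono (hfit.lookup_cons_self _)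
      · exact ih₂ σ₁ σ₂ hσ hcap.2.2.2 (hfit.cons ‹_› hcap.1 _)

/-- Slots `13`–`15` hold the level-`0` binders of `kidTm`; they are exempt because they never clash
with the slot-`0` and slot-`1` variables free in the terms that the control rules substitute. -/
def AboveLevel (n : Nat) : CVar → Prop
  | .inl _ => True
  | .inr (m, s) => s ≤ 12 → n ≤ m

@[simp]
theorem aboveLevel_inl {n : Nat} {x : String} : AboveLevel n (.inl x) ↔ True := Iff.rfl

@[simp]
theorem aboveLevel_gv {n m s : Nat} : AboveLevel n (gv m s) ↔ (s ≤ 12 → n ≤ m) := Iff.rfl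

theorem AboveLevel.mono {m n : Nat} (hmn : m ≤ n) : ∀ {z : CVar}, AboveLevel n z → AboveLevel m z
  | .inl _, _ => trivial
  | .inr _, h => fun hs => hmn.trans (h hs)

theorem AboveLevel.ne_gv {n s : Nat} {z : CVar} (h : AboveLevel (n + 1) z) (hs : s ≤ 12) :
    z ≠ gv n s := by
  rintro rfl
  exact absurd (h hs) (by omega)

theorem AllBinders.aboveLevel_mono {m n : Nat} (hmn : m ≤ n) {e : CTm}
    (h : AllBinders (AboveLevel n) e) : AllBinders (AboveLevel m) e :=
  h.mono fun _ => AboveLevel.mono hmn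

theorem AllBinders.aboveLevel_kidTm (n : Nat) : AllBinders (AboveLevel n) kidTm := by
  simp [AllBinders, kidTm]

theorem AllBinders.aboveLevel_fconsTm (μ₁ μB μC : FTr) {l m : Nat} (hlm : l ≤ m) {k t : CTm}
    (hk : AllBinders (AboveLevel l) k) (ht : AllBinders (AboveLevel l) t) :
    AllBinders (AboveLevel l) (fconsTm μ₁ μB μC m k t) := by
  induction μ₁, μB, μC, m, k, t using fconsTm.induct with
  | case1 _ _ _ _ _ _ _ m _ _ ih =>
      simp only [fconsTm, AllBinders, aboveLevel_gv]
      exact ⟨fun _ => hlm, ht, hk, fun _ => hlm, fun _ => hlm, ⟨hk, trivial⟩,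
        ih (hlm.trans m.le_succ) trivial trivial⟩
  | case2 =>
      simp only [fconsTm, AllBinders, aboveLevel_gv]
      exact ⟨fun _ => hlm, ht, hk, fun _ => hlm, fun _ => hlm, ⟨hk, trivial⟩, trivial⟩

theorem AllBinders.aboveLevel_fappendTm (μA μB μC : FTr) {m : Nat} {t t' : CTm}
    (ht : AllBinders (AboveLevel m) t) (ht' : AllBinders (AboveLevel m) t') :
    AllBinders (AboveLevel m) (fappendTm μA μB μC m t t') := by
  cases μA with
  | empty => exact ⟨fun _ => le_rfl, ht, ht', trivial⟩
  | cons => exact ⟨fun _ => le_rfl, ht, ht', aboveLevel_fconsTm _ _ _ m.le_succ trivial ht'⟩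

theorem hasTypeC_kidTm {β β' : FTy} {μi : FTr} (hid : FIdContType β μi β') (Δ : CCtx) :
    HasTypeC Δ kidTm (contTy β μi β') := by
  refine .lam _ _ _ _ _ (.lam _ _ _ _ _ ?_)
  cases μi with
  | empty =>
      obtain rfl : β = β' := hid
      refine .ccase _ _ _ _ _ (fcpsTr .empty) _ (.var _ _ _ (.here ..))
        (fun _ => .var _ _ _ (.cons_gv (.here ..)))
        (fun _ _ h => nomatch h)
  | cons =>
      obtain ⟨rfl, rfl, rfl⟩ := hid
      refine .ccase _ _ _ _ _ (fcpsTr (.cons β .empty β')) _ (.var _ _ _ (.here ..))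
        (fun h => nomatch h) (fun _ _ _ => ?_)
      refine .app _ _ _ CTy.unit _ (.app _ _ _ (fcpsTy β) _ (.var _ _ _ (.here ..)) ?_) (.unit _)
      exact .var _ _ _ (.cons_gv (.cons_gv (.here ..)))

theorem hasTypeC_fconsTm {μA μB μC : FTr} (h : FCompatible μA μB μC) :
    ∀ {τ₀ τ₀' : FTy} {μ₁ : FTr}, μA = .cons τ₀ μ₁ τ₀' →
    ∀ {m : Nat} {Δ : CCtx} {xk : CVar} {t : CTm},
      CLookup Δ xk (fcpsTr μA) → HasTypeC Δ t (fcpsTr μB) →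
      (hxk : xk ≠ gv m 10 ∧ xk ≠ gv m 11 ∧ xk ≠ gv m 12 := by simp [gv]) →
      HasTypeC Δ (fconsTm μ₁ μB μC m (.cvar xk) t) (fcpsTr μC) := by
  induction h with
  | empty => intro _ _ _ hA; cases hA
  | consEmpty =>
      rintro _ _ _ ⟨⟩ m Δ xk t hk ht -
      simp only [fconsTm]
      exact .ccase _ _ _ _ _ (fcpsTr .empty) _ ht (fun _ => .var _ _ _ hk) (fun _ _ h => nomatch h)
  | consCons τ₁ ν₁ τ₁' μ₂ μ₃ hsub ih =>
      rintro _ _ _ ⟨⟩ m Δ xk t hk ht ⟨h10, h11, h12⟩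
      cases μ₂ with
      | empty =>
          cases hsub
          simp only [fconsTm]
          exact .ccase _ _ _ _ _ (fcpsTr .empty) _ ht (fun _ => .var _ _ _ hk)
            (fun _ _ h => nomatch h)
      | cons τb μB' τb' =>
          simp only [fconsTm]
          refine .ccase _ _ _ _ _ (fcpsTr (.cons τb μB' τb')) _ ht (fun h => nomatch h)
            (fun _ _ _ => .lam _ _ _ _ _ (.lam _ _ _ _ _ (.app _ _ _ (fcpsTr ν₁) _ ?_ ?_)))
          · refine .app _ _ _ (fcpsTy τ₁) _ (.var _ _ _ ?_) (.var _ _ _ ?_)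
            · exact .there _ _ _ _ _ h12 (.there _ _ _ _ _ h11 (.there _ _ _ _ _ h10 hk))
            · exact .cons_gv (.here ..)
          · exact ih rfl (.cons_gv (.cons_gv (.here ..))) (.var _ _ _ (.here ..))

theorem hasTypeC_fappendTm {μA μB μC : FTr} (h : FCompatible μA μB μC) {m : Nat} {Δ : CCtx}
    {t t' : CTm} (ht : HasTypeC Δ t (fcpsTr μA)) (ht' : HasTypeC Δ t' (fcpsTr μB))
    (ht'_under : ∀ σ, HasTypeC ((gv m 10, σ) :: Δ) t' (fcpsTr μB)) :
    HasTypeC Δ (fappendTm μA μB μC m t t') (fcpsTr μC) := by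
  cases μA with
  | empty =>
      cases h
      exact .ccase _ _ _ _ _ (fcpsTr .empty) _ ht (fun _ => ht') (fun _ _ h => nomatch h)
  | cons =>
      refine .ccase _ _ _ _ _ (fcpsTr (.cons ..)) _ ht (fun h => nomatch h) (fun _ _ _ => ?_)
      exact hasTypeC_fconsTm h rfl (.here ..) (ht'_under _)

theorem AllBinders.aboveLevel_control {n : Nat} {e' : CTm} {x : CVar} {v : CTm}
    (he : AllBinders (AboveLevel (n + 1)) e') (hv : AllBinders (AboveLevel n) v) :
    AllBinders (AboveLevel n)
      (.clam (gv n 0) (.clam (gv n 1) (.capp (.capp (substC e' x v) kidTm) .unit))) := by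
  simpa [AllBinders] using ⟨(he.aboveLevel_mono n.le_succ).subst x hv, aboveLevel_kidTm n⟩

mutual

theorem SelP.aboveLevel : ∀ {n : Nat} {Γ : FCtx} {e : Tm} {τ : FTy} {e' : CTm},
    SelP n Γ e τ e' → AllBinders (AboveLevel n) e'
  | _, _, _, _, _, .const .. | _, _, _, _, _, .var .. => trivial
  | n, _, _, _, _, .pabs _ _ _ _ _ _ _ h => by
      simpa [AllBinders] using h.aboveLevel.aboveLevel_mono n.le_succ
  | n, _, _, _, _, .iabs _ _ _ _ _ _ _ _ _ _ _ h => by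
      simpa [AllBinders] using h.aboveLevel.aboveLevel_mono n.le_succ
  | n, _, _, _, _, .papp _ _ _ _ _ _ _ _ h₁ h₂ => by
      simpa [AllBinders] using ⟨h₁.aboveLevel.aboveLevel_mono n.le_succ,
        h₂.aboveLevel.aboveLevel_mono (by omega)⟩
  | n, _, _, _, _, .prompt _ _ _ _ _ _ _ _ h _ => by
      simpa [AllBinders] using ⟨h.aboveLevel.aboveLevel_mono n.le_succ,
        AllBinders.aboveLevel_kidTm n⟩

theorem SelI.aboveLevel : ∀ {n : Nat} {Γ : FCtx} {e : Tm} {τ : FTy} {μα : FTr} {α : FTy}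
    {μβ : FTr} {β : FTy} {e' : CTm}, SelI n Γ e τ μα α μβ β e' → AllBinders (AboveLevel n) e'
  | n, _, _, _, _, _, _, _, _, .piapp _ _ _ _ _ _ _ _ _ _ _ _ _ _ h₁ h₂
  | n, _, _, _, _, _, _, _, _, .iapp _ _ _ _ _ _ _ _ _ _ _ _ _ _ _ _ h₁ h₂ => by
      simpa [AllBinders] using ⟨h₁.aboveLevel.aboveLevel_mono n.le_succ,
        h₂.aboveLevel.aboveLevel_mono (by omega)⟩
  | _, _, _, _, _, _, _, _, _, .pcontrol _ _ _ _ _ _ _ _ _ _ _ _ h _ =>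
      .aboveLevel_control h.aboveLevel (by simp [AllBinders])
  | n, _, _, _, _, _, _, _, _,
      .icontrol _ _ _ _ _ _ μ₁ _ μ₂ μ₀ _ _ _ _ _ μα μβ _ h _ _ _ => by
      have hv : AllBinders (AboveLevel n) (fappendTm μβ μ₀ μα n (.cvar (gv n 1))
          (fconsTm μ₁ μ₂ μ₀ n (.cvar (gv n 3)) (.cvar (gv n 4)))) :=
        .aboveLevel_fappendTm _ _ _ trivial (.aboveLevel_fconsTm _ _ _ le_rfl trivial trivial)
      exact .aboveLevel_control h.aboveLevel (by simpa [AllBinders] using hv)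
  | _, _, _, _, _, _, _, _, _, .exp _ _ _ _ _ _ _ h => by
      simpa [AllBinders] using h.aboveLevel

end

theorem HasTypeC.control {n : Nat} {Γ : FCtx} {k : String} {σk : CTy} {e' v : CTm}
    {γ γ' β τ α : FTy} {μi μα μβ : FTr}
    (he : HasTypeC ((.inl k, σk) :: cpsCtx Γ) e' (compTy γ μi γ' .empty β))
    (hbind : AllBinders (AboveLevel (n + 1)) e') (hid : FIdContType γ μi γ')
    (hv : ∀ Δ, CLookup Δ (gv n 0) (contTy τ μα α) → CLookup Δ (gv n 1) (fcpsTr μβ) →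
      HasTypeC Δ v σk) :
    HasTypeC (cpsCtx Γ)
      (.clam (gv n 0) (.clam (gv n 1) (.capp (.capp (substC e' (.inl k) v) kidTm) .unit)))
      (compTy τ μα α μβ β) := by
  refine .lam _ _ _ _ _ (.lam _ _ _ _ _
    (.app _ _ _ .unit _ (.app _ _ _ _ _ ?_ (hasTypeC_kidTm hid _)) (.unit _)))
  refine he.subst (FV := fun z => z = gv n 0 ∨ z = gv n 1)
    (hbind.mono fun z hz => ?_) ⟨fun _ => CLookup.eq_of_head, fun y τ hyk hy => ?_, ?_⟩
  · rintro (rfl | rfl) <;> exact hz.ne_gv (by omega) rfl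
  · cases hy with
    | here => exact absurd rfl hyk
    | there _ _ _ _ _ _ hy =>
        obtain ⟨x, rfl⟩ := hy.exists_inl_of_cpsCtx
        exact hy.append_of_inl (L := [(gv n 1, _), (gv n 0, _)]) (by simp [gv])
  · intro Δ hΔ
    exact hv Δ (hΔ _ (Or.inl rfl) _ (.cons_gv (.here ..)))
      (hΔ _ (Or.inr rfl) _ (.here ..))

theorem HasTypeC.pcontrol_cont {n : Nat} {Δ : CCtx} {τ α : FTy} {μα : FTr}
    (h₀ : CLookup Δ (gv n 0) (contTy τ μα α)) (h₁ : CLookup Δ (gv n 1) (fcpsTr μα)) :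
    HasTypeC Δ (.clam (gv n 2) (.capp (.capp (.cvar (gv n 0)) (.cvar (gv n 2))) (.cvar (gv n 1))))
      (fcpsTy (.parrow τ α)) :=
  .lam _ _ _ _ _ (.app _ _ _ _ _
    (.app _ _ _ _ _ (.var _ _ _ (.cons_gv h₀)) (.var _ _ _ (.here ..)))
    (.var _ _ _ (.cons_gv h₁)))

theorem HasTypeC.icontrol_cont {n : Nat} {Δ : CCtx} {τ τ₁ τ₁' α : FTy} {μ₁ μ₂ μ₀ μα μβ : FTr}
    (hc₁ : FCompatible (.cons τ₁ μ₁ τ₁') μ₂ μ₀) (hc₂ : FCompatible μβ μ₀ μα)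
    (h₀ : CLookup Δ (gv n 0) (contTy τ μα α)) (h₁ : CLookup Δ (gv n 1) (fcpsTr μβ)) :
    HasTypeC Δ
      (.clam (gv n 2) (.clam (gv n 3) (.clam (gv n 4)
        (.capp (.capp (.cvar (gv n 0)) (.cvar (gv n 2)))
          (fappendTm μβ μ₀ μα n (.cvar (gv n 1))
            (fconsTm μ₁ μ₂ μ₀ n (.cvar (gv n 3)) (.cvar (gv n 4))))))))
      (fcpsTy (.arrow τ τ₁ μ₁ τ₁' μ₂ α)) := by
  refine .lam _ _ _ _ _ (.lam _ _ _ _ _ (.lam _ _ _ _ _ (.app _ _ _ (fcpsTr μα) _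
    (.app _ _ _ (fcpsTy τ) _ (.var _ _ _ ?_) (.var _ _ _ ?_))
    (hasTypeC_fappendTm hc₂ (.var _ _ _ ?_) ?_ fun σ => ?_))))
  · exact .cons_gv (.cons_gv (.cons_gv h₀))
  · exact .cons_gv (.cons_gv (.here ..))
  · exact .cons_gv (.cons_gv (.cons_gv h₁))
  · exact hasTypeC_fconsTm hc₁ rfl (.cons_gv (.here ..)) (.var _ _ _ (.here ..))
  · exact hasTypeC_fconsTm hc₁ rfl (.cons_gv (.cons_gv (.here ..))) (.var _ _ _ (.cons_gv (.here ..)))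

mutual

theorem SelP.hasTypeC : ∀ {n : Nat} {Γ : FCtx} {e : Tm} {τ : FTy} {e' : CTm},
    SelP n Γ e τ e' → HasTypeC (cpsCtx Γ) e' (fcpsTy τ)
  | _, _, _, _, _, .const .. => .const ..
  | _, _, _, _, _, .var _ _ _ _ h => .var _ _ _ h.cLookup_cpsCtx
  | _, _, _, _, _, .pabs _ _ _ _ _ _ _ h => .lam _ _ _ _ _ h.hasTypeC
  | _, _, _, _, _, .iabs _ _ _ _ _ _ _ _ _ _ _ h =>
      .lam _ _ _ _ _ (.lam _ _ _ _ _ (.lam _ _ _ _ _ (.app _ _ _ _ _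
        (.app _ _ _ _ _ (h.hasTypeC.weaken_cpsCtx [_, _] (by simp [gv]))
          (.var _ _ _ (.cons_gv (.here ..))))
        (.var _ _ _ (.here ..)))))
  | _, _, _, _, _, .papp _ _ _ _ _ _ _ _ h₁ h₂ => .app _ _ _ _ _ h₁.hasTypeC h₂.hasTypeC
  | _, _, _, _, _, .prompt _ _ _ _ _ _ _ _ h hid =>
      .app _ _ _ .unit _ (.app _ _ _ _ _ h.hasTypeC (hasTypeC_kidTm hid _)) (.unit _)

theorem SelI.hasTypeC : ∀ {n : Nat} {Γ : FCtx} {e : Tm} {τ : FTy} {μα : FTr} {α : FTy}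
    {μβ : FTr} {β : FTy} {e' : CTm},
    SelI n Γ e τ μα α μβ β e' → HasTypeC (cpsCtx Γ) e' (compTy τ μα α μβ β)
  | _, _, _, _, _, _, _, _, _, .piapp _ _ _ _ _ _ _ _ _ _ _ _ _ _ h₁ h₂ =>
      .lam _ _ _ _ _ (.app _ _ _ _ _ (h₁.hasTypeC.weaken_cpsCtx [_] (by simp [gv]))
        (.lam _ _ _ _ _ (.app _ _ _ _ _ (h₂.hasTypeC.weaken_cpsCtx [_, _] (by simp [gv]))
          (.lam _ _ _ _ _ (.app _ _ _ _ _
            (.var _ _ _ (.cons_gv (.cons_gv (.here ..))))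
            (.app _ _ _ _ _ (.var _ _ _ (.cons_gv (.here ..)))
              (.var _ _ _ (.here ..))))))))
  | _, _, _, _, _, _, _, _, _, .iapp _ _ _ _ _ _ _ _ _ _ _ _ _ _ _ _ h₁ h₂ =>
      .lam _ _ _ _ _ (.app _ _ _ _ _ (h₁.hasTypeC.weaken_cpsCtx [_] (by simp [gv]))
        (.lam _ _ _ _ _ (.app _ _ _ _ _ (h₂.hasTypeC.weaken_cpsCtx [_, _] (by simp [gv]))
          (.lam _ _ _ _ _ (.app _ _ _ _ _
            (.app _ _ _ _ _ (.var _ _ _ (.cons_gv (.here ..)))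
              (.var _ _ _ (.here ..)))
            (.var _ _ _ (.cons_gv (.cons_gv (.here ..)))))))))
  | _, _, _, _, _, _, _, _, _, .pcontrol _ _ _ _ _ _ _ _ _ _ _ _ h hid =>
      .control h.hasTypeC h.aboveLevel hid fun _ => .pcontrol_cont
  | _, _, _, _, _, _, _, _, _, .icontrol _ _ _ _ _ _ _ _ _ _ _ _ _ _ _ _ _ _ h hid hc₁ hc₂ =>
      .control h.hasTypeC h.aboveLevel hid fun _ => .icontrol_cont hc₁ hc₂
  | _, _, _, _, _, _, _, _, _, .exp _ _ _ _ _ _ _ h =>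
      .lam _ _ _ _ _ (.lam _ _ _ _ _ (.app _ _ _ _ _
        (.app _ _ _ _ _ (.var _ _ _ (.cons_gv (.here ..)))
          (h.hasTypeC.weaken_cpsCtx [_, _] (by simp [gv])))
        (.var _ _ _ (.here ..))))

end

/-- **Type preservation of the selective CPS translation**:
    (1) if `Γ ⊢p e : τ ⇝p e′` then `⟦Γ⟧ ⊢C e′ : ⟦τ⟧`; and
    (2) if `Γ ⊢ e : τ @ μα α / μβ β ⇝ e′` then
    `⟦Γ⟧ ⊢C e′ : (⟦τ⟧ → ⟦μα⟧ → ⟦α⟧) → ⟦μβ⟧ → ⟦β⟧`. -/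
theorem selective_cps_preserves_typing :
    (∀ (n : Nat) (Γ : FCtx) (e : Tm) (τ : FTy) (e' : CTm),
        SelP n Γ e τ e' →
        HasTypeC (Γ.map fun p => (Sum.inl p.1, fcpsTy p.2)) e' (fcpsTy τ)) ∧
    (∀ (n : Nat) (Γ : FCtx) (e : Tm) (τ : FTy) (μα : FTr) (α : FTy)
        (μβ : FTr) (β : FTy) (e' : CTm),
        SelI n Γ e τ μα α μβ β e' →
        HasTypeC (Γ.map fun p => (Sum.inl p.1, fcpsTy p.2)) e'
          (.arrow (.arrow (fcpsTy τ) (.arrow (fcpsTr μα) (fcpsTy α)))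
            (.arrow (fcpsTr μβ) (fcpsTy β)))) :=
  ⟨fun _ _ _ _ _ h => h.hasTypeC, fun _ _ _ _ _ _ _ _ _ h => h.hasTypeC⟩

end LambdaF
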